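/- arXiv:0901.4858 — 5 statements merged into one kernel-verified Lean document; each statement's English description precedes it below -/
import Mathlib

section
/- Every locally finite graph (every vertex has finite degree) admits an unfriendly partition. -/
/-!
A colouring minimising the number of monochromatic ordered pairs of adjacent vertices of a
finite set `W` makes every vertex whose neighbourhood lies in `W` happy: recolouring an unhappy
vertex `x` removes `2 (same x - other x) > 0` such pairs. In the compact space `V → Bool` the
set of colourings in which `x` is happy is closed, as it only depends on the colours of `x` and
its finitely many neighbours; the finite case gives the finite intersection property.
-/

open Cardinal Finset

/-- A vertex `x` is happy in the two-colouring `π` of `G` if it has at least as many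
neighbours in the opposite class as in its own class (as cardinals). -/
def Happy {V : Type*} (G : SimpleGraph V) (π : V → Bool) (x : V) : Prop :=
  #{y : V | G.Adj x y ∧ π y = π x} ≤ #{y : V | G.Adj x y ∧ π y ≠ π x}

/-- A two-colouring is unfriendly if every vertex is happy in it. -/
def Unfriendly {V : Type*} (G : SimpleGraph V) (π : V → Bool) : Prop :=
  ∀ x : V, Happy G π x

theorem Finset.sum_sum_eq_sum_add_sum_of_eq_zero {α M : Type*} [AddCommMonoid M] [DecidableEq α]
    {s : Finset α} {x : α} (hx : x ∈ s) (g : α → α → M) (hxx : g x x = 0)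
    (hg : ∀ y z, y ≠ x → z ≠ x → g y z = 0) :
    ∑ y ∈ s, ∑ z ∈ s, g y z = ∑ y ∈ s, g y x + ∑ z ∈ s, g x z := by
  have hrow :
      ∀ y ∈ s, ∑ z ∈ s, g y z = g y x + if y = x then ∑ z ∈ s, g x z else 0 := by
    intro y _
    by_cases hy : y = x
    · simp [hy, hxx]
    · rw [if_neg hy, add_zero]
      exact sum_eq_single_of_mem x hx fun z _ hz => hg y z hy hz
  rw [sum_congr rfl hrow, sum_add_distrib, sum_ite_eq', if_pos hx]

namespace SimpleGraph

variable {V : Type*} (G : SimpleGraph V)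

theorem happy_congr {π π' : V → Bool} {x : V} (hx : π x = π' x)
    (hN : ∀ y, G.Adj x y → π y = π' y) : Happy G π x ↔ Happy G π' x := by
  have hsame : {y | G.Adj x y ∧ π y = π x} = {y | G.Adj x y ∧ π' y = π' x} := by
    ext y
    simp +contextual [hx, hN y]
  have hdiff : {y | G.Adj x y ∧ π y ≠ π x} = {y | G.Adj x y ∧ π' y ≠ π' x} := by
    ext y
    simp +contextual [hx, hN y]
  rw [Happy, Happy, hsame, hdiff]

theorem isClosed_setOf_happy {x : V} (hx : (G.neighborSet x).Finite) :
    IsClosed {π : V → Bool | Happy G π x} := by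
  set K : Set V := insert x (G.neighborSet x)
  have : Finite K := (hx.insert x).to_subtype
  suffices {π : V → Bool | Happy G π x} =
      K.domRestrict ⁻¹' (K.domRestrict '' {π | Happy G π x}) by
    rw [this]
    exact (isClosed_discrete _).preimage (Pi.continuous_domRestrict K)
  refine (Set.subset_preimage_image _ _).antisymm ?_
  rintro π ⟨π', hπ', heq⟩
  have hK : ∀ y ∈ K, π' y = π y := fun y hy => congrFun heq ⟨y, hy⟩
  exact (G.happy_congr (hK x (Set.mem_insert x _))
    fun y hy => hK y (Set.mem_insert_of_mem x hy)).1 hπ'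

variable [DecidableRel G.Adj]

def sameColourNbrs (W : Finset V) (π : V → Bool) (x : V) : Finset V :=
  {y ∈ W | G.Adj x y ∧ π y = π x}

def otherColourNbrs (W : Finset V) (π : V → Bool) (x : V) : Finset V :=
  {y ∈ W | G.Adj x y ∧ π y ≠ π x}

theorem happy_iff_card_le {W : Finset V} {π : V → Bool} {x : V}
    (hN : G.neighborSet x ⊆ W) :
    Happy G π x ↔ (G.sameColourNbrs W π x).card ≤ (G.otherColourNbrs W π x).card := by
  have hfilter : ∀ p : V → Prop, [DecidablePred p] →
      {y | G.Adj x y ∧ p y} = ((W.filter fun y => G.Adj x y ∧ p y : Finset V) : Set V) := by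
    intro p _
    ext y
    simpa using fun hy _ => hN hy
  rw [Happy, hfilter, hfilter, sameColourNbrs, otherColourNbrs]
  simp only [coe_sort_coe, mk_coe_finset, Nat.cast_le]

def monoPairs (W : Finset V) (π : V → Bool) : ℕ :=
  ∑ y ∈ W, ∑ z ∈ W, if G.Adj y z ∧ π y = π z then 1 else 0

theorem monoPairs_update_not [DecidableEq V] {W : Finset V} (π : V → Bool) {x : V}
    (hx : x ∈ W) :
    (G.monoPairs W (Function.update π x !π x) : ℤ) = G.monoPairs W π
      - 2 * ((G.sameColourNbrs W π x).card - (G.otherColourNbrs W π x).card : ℤ) := by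
  set π' := Function.update π x !π x
  set mono : (V → Bool) → V → V → ℤ := fun π y z =>
    if G.Adj y z ∧ π y = π z then 1 else 0
  have hmono : ∀ π, (G.monoPairs W π : ℤ) = ∑ y ∈ W, ∑ z ∈ W, mono π y z := by
    intro π
    simp [monoPairs, mono]
  have hsymm : ∀ π y z, mono π y z = mono π z y := by
    intro π y z
    simp only [mono, G.adj_comm y z, eq_comm (a := π y)]
  have hflip := sum_sum_eq_sum_add_sum_of_eq_zero hx (fun y z => mono π y z - mono π' y z)
    (by simp [mono]) fun y z hy hz => by simp [mono, π', hy, hz]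
  have hrow : ∑ z ∈ W, mono π x z - ∑ z ∈ W, mono π' x z
      = (G.sameColourNbrs W π x).card - (G.otherColourNbrs W π x).card := by
    congr 1
    · rw [sameColourNbrs, ← sum_boole]
      exact sum_congr rfl fun z _ => by simp only [mono, eq_comm]
    · rw [otherColourNbrs, ← sum_boole]
      refine sum_congr rfl fun z _ => ?_
      by_cases hzx : z = x
      · simp [mono, hzx]
      · simp only [mono, π', Function.update_self, Function.update_of_ne hzx]
        cases π x <;> cases π z <;> simp
  simp only [hsymm _ _ x, sum_sub_distrib] at hflip
  rw [hmono, hmono, ← hrow]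
  linear_combination -hflip

theorem happy_of_monoPairs_le {W : Finset V} {π : V → Bool}
    (hπ : ∀ π', G.monoPairs W π ≤ G.monoPairs W π') {x : V} (hx : x ∈ W)
    (hN : G.neighborSet x ⊆ W) : Happy G π x := by
  classical
  rw [G.happy_iff_card_le hN]
  by_contra! hlt
  have hflip := G.monoPairs_update_not π hx
  have hmin := hπ (Function.update π x !π x)
  omega

theorem exists_forall_mem_happy (hlf : ∀ v, (G.neighborSet v).Finite) (F : Finset V) :
    ∃ π : V → Bool, ∀ x ∈ F, Happy G π x := by
  classical
  set W := F ∪ F.biUnion fun v => (hlf v).toFinset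
  refine ⟨Function.argmin (G.monoPairs W), fun x hx =>
    G.happy_of_monoPairs_le (fun π' => Function.argmin_le _ π') (mem_union_left _ hx)
      fun y hy => ?_⟩
  exact mem_union_right _ (mem_biUnion.2 ⟨x, hx, (hlf x).mem_toFinset.2 hy⟩)

end SimpleGraph

/-- Every locally finite graph admits an unfriendly partition. -/
theorem locallyFinite_unfriendly {V : Type*} (G : SimpleGraph V)
    (hlf : ∀ v : V, (G.neighborSet v).Finite) :
    ∃ π : V → Bool, Unfriendly G π := by
  classical
  obtain ⟨π, -, hπ⟩ := isCompact_univ.inter_iInter_nonempty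
    (fun x => {π : V → Bool | Happy G π x}) (fun x => G.isClosed_setOf_happy (hlf x))
    fun F => by
      obtain ⟨π, hπ⟩ := G.exists_forall_mem_happy hlf F
      exact ⟨π, trivial, Set.mem_iInter₂.2 hπ⟩
  exact ⟨π, Set.mem_iInter.1 hπ⟩
end

section
/- Every countable graph in which all but finitely many vertices have infinite degree admits an unfriendly partition. -/
open Cardinal

/-!
Let `W` consist of the finitely many vertices of finite degree together with all their
neighbours. Colour `W` by an unfriendly partition of the finite graph `G[W]`; this makes every
finite-degree vertex happy, since all its neighbours lie in `W`. Outside `W`, colour so that each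
infinite-degree vertex has infinitely many neighbours of either colour outside `W`: this is a
diagonal choice of distinct representatives for the countably many pairs (vertex, colour). An
infinite-degree vertex then has infinitely many opponents, and at most `ℵ₀` neighbours at all.
-/

open Function

theorem exists_injective_nat_forall_mem {α : Type*} (B : ℕ → Set α)
    (hB : ∀ n, (B n).Infinite) : ∃ f : ℕ → α, Injective f ∧ ∀ n, f n ∈ B n := by
  classical
  choose pick hpick using fun n (s : Finset α) => ((hB n).sdiff s.finite_toSet).nonempty
  let S : ℕ → Finset α := fun n =>
    Nat.rec (motive := fun _ => Finset α) ∅ (fun k s => insert (pick k s) s) n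
  have hS : Monotone S := monotone_nat_of_le_succ fun n => Finset.subset_insert _ _
  refine ⟨fun n => pick n (S n), fun m n hmn => ?_, fun n => (hpick n (S n)).1⟩
  simp only at hmn
  by_contra hne
  wlog hlt : m < n generalizing m n
  · exact this n m hmn.symm (Ne.symm hne) (by omega)
  exact (hpick n (S n)).2 (hmn ▸ hS hlt (Finset.mem_insert_self _ _))

theorem exists_injective_forall_mem {ι α : Type*} [Countable ι] (B : ι → Set α)
    (hB : ∀ i, (B i).Infinite) : ∃ f : ι → α, Injective f ∧ ∀ i, f i ∈ B i := by
  cases isEmpty_or_nonempty ι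
  · exact ⟨isEmptyElim, fun i => isEmptyElim i, isEmptyElim⟩
  obtain ⟨e, he⟩ := exists_surjective_nat ι
  obtain ⟨f, hf, hfB⟩ := exists_injective_nat_forall_mem (B ∘ e) (fun n => hB (e n))
  refine ⟨f ∘ surjInv he, hf.comp (injective_surjInv he), fun i => ?_⟩
  simpa [surjInv_eq he i] using hfB (surjInv he i)

theorem exists_coloring_forall_sep_infinite {ι α : Type*} [Countable ι] (A : ι → Set α)
    (hA : ∀ i, (A i).Infinite) :
    ∃ τ : α → Bool, ∀ i b, {y ∈ A i | τ y = b}.Infinite := by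
  obtain ⟨f, hf, hfA⟩ :=
    exists_injective_forall_mem (fun d : ι × Bool × ℕ => A d.1) (hA ·.1)
  refine ⟨extend f (fun d => d.2.1) (fun _ => true), fun i b => ?_⟩
  refine (Set.infinite_range_of_injective (f := fun n => f (i, b, n)) ?_).mono ?_
  · intro m n h
    simpa using hf h
  · rintro _ ⟨n, rfl⟩
    exact ⟨hfA (i, b, n), hf.extend_apply _ _ _⟩

theorem Fintype.sum_sum_eq_two_nsmul_add_sum_sum_compl {ι M : Type*} [Fintype ι]
    [DecidableEq ι] [AddCommMonoid M] (f : ι → ι → M) (hf : ∀ a b, f a b = f b a) (v : ι)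
    (hv : f v v = 0) :
    ∑ a, ∑ b, f a b = 2 • ∑ b, f v b + ∑ a ∈ {v}ᶜ, ∑ b ∈ {v}ᶜ, f a b := by
  have hcol : ∑ a ∈ {v}ᶜ, f a v = ∑ b, f v b := by
    rw [Fintype.sum_eq_add_sum_compl v (f v), hv, zero_add]
    exact Finset.sum_congr rfl fun a _ => hf a v
  rw [Fintype.sum_eq_add_sum_compl v (fun a => ∑ b, f a b), two_nsmul, add_assoc]
  congr 1
  rw [Finset.sum_congr rfl fun a _ => Fintype.sum_eq_add_sum_compl v (f a), Finset.sum_add_distrib,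
    hcol]

namespace SimpleGraph

variable {V : Type*} (G : SimpleGraph V)

theorem happy_iff_card_le_s4 [Fintype V] [DecidableRel G.Adj] (π : V → Bool) (v : V) :
    Happy G π v ↔ ({y | G.Adj v y ∧ π y = π v} : Finset V).card ≤
      ({y | G.Adj v y ∧ π y ≠ π v} : Finset V).card := by
  simp [Happy, Cardinal.mk_fintype, Fintype.card_subtype]

/-- Flipping `v` trades its same-coloured neighbours for its opponents in the count of
monochromatic ordered edges, so a colouring minimising that count is unfriendly. -/
theorem exists_unfriendly_of_finite [Finite V] : ∃ π, Unfriendly G π := by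
  classical
  have := Fintype.ofFinite V
  let mono (π : V → Bool) (a b : V) : ℕ := if G.Adj a b ∧ π b = π a then 1 else 0
  obtain ⟨π, -, hmin⟩ :=
    Finset.exists_min_image .univ (fun π => ∑ a, ∑ b, mono π a b) Finset.univ_nonempty
  refine ⟨π, fun v => ?_⟩
  let π' := update π v (!π v)
  have hdecomp (σ : V → Bool) := Fintype.sum_sum_eq_two_nsmul_add_sum_sum_compl (mono σ)
    (fun a b => by simp only [mono, G.adj_comm, eq_comm]) v (by simp [mono])
  have hrest :
      ∑ a ∈ {v}ᶜ, ∑ b ∈ {v}ᶜ, mono π' a b = ∑ a ∈ {v}ᶜ, ∑ b ∈ {v}ᶜ, mono π a b := by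
    refine Finset.sum_congr rfl fun a ha => Finset.sum_congr rfl fun b hb => ?_
    have ha : a ≠ v := by simpa using ha
    have hb : b ≠ v := by simpa using hb
    simp only [mono, π', update_of_ne ha, update_of_ne hb]
  have hflip : ∑ b, mono π' v b = ({y | G.Adj v y ∧ π y ≠ π v} : Finset V).card := by
    rw [Finset.card_filter]
    refine Finset.sum_congr rfl fun y _ => ?_
    by_cases hvy : G.Adj v y
    · cases hy : π y <;> cases hv : π v <;> simp [mono, π', hvy, hvy.ne', hy, hv]
    · simp [mono, hvy]
  have hsame : ∑ b, mono π v b = ({y | G.Adj v y ∧ π y = π v} : Finset V).card :=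
    (Finset.card_filter _ _).symm
  have := hmin π' (Finset.mem_univ _)
  simp only [hdecomp, hrest, hflip, hsame, smul_eq_mul] at this
  rw [happy_iff_card_le_s4]
  omega

theorem happy_induce_iff {W : Set V} {π : V → Bool} {v : V} (hv : v ∈ W)
    (hN : G.neighborSet v ⊆ W) :
    Happy (G.induce W) (π ∘ (↑)) ⟨v, hv⟩ ↔ Happy G π v := by
  have hmk (q : V → Prop) :=
    Cardinal.mk_preimage_of_injective_of_subset_range ((↑) : W → V) {y | G.Adj v y ∧ q y}
      Subtype.val_injective fun y hy => ⟨⟨y, hN hy.1⟩, rfl⟩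
  exact Iff.of_eq (congrArg₂ (· ≤ ·) (hmk (π · = π v)) (hmk (π · ≠ π v)))

theorem happy_of_infinite_opponents [Countable V] {π : V → Bool} {v : V}
    (h : {y | G.Adj v y ∧ π y ≠ π v}.Infinite) : Happy G π v :=
  Cardinal.mk_le_aleph0.trans (Cardinal.infinite_iff.mp h.to_subtype)

end SimpleGraph

/-- Every countable graph in which all but finitely many vertices have infinite degree admits
an unfriendly partition. -/
theorem countable_cofinitelyInfiniteDegree_unfriendly {V : Type*} [Countable V]
    (G : SimpleGraph V) (hfin : {v : V | (G.neighborSet v).Finite}.Finite) :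
    ∃ π : V → Bool, Unfriendly G π := by
  classical
  set F := {v : V | (G.neighborSet v).Finite}
  set W := F ∪ ⋃ v ∈ F, G.neighborSet v
  have hW : W.Finite := hfin.union (hfin.biUnion fun _ => id)
  have := hW.to_subtype
  obtain ⟨σ, hσ⟩ := (G.induce W).exists_unfriendly_of_finite
  obtain ⟨τ, hτ⟩ := exists_coloring_forall_sep_infinite
    (fun v : {v // (G.neighborSet v).Infinite} => G.neighborSet v \ W) (·.2.sdiff hW)
  let π x := if h : x ∈ W then σ ⟨x, h⟩ else τ x
  have hπσ : π ∘ (↑) = σ := funext fun x => dif_pos x.2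
  refine ⟨π, fun v => ?_⟩
  by_cases hv : (G.neighborSet v).Finite
  · have hvW : v ∈ W := Or.inl hv
    rw [← G.happy_induce_iff hvW fun y hy => Or.inr (Set.mem_biUnion hv hy), hπσ]
    exact hσ _
  · refine G.happy_of_infinite_opponents ((hτ ⟨v, hv⟩ (!π v)).mono ?_)
    rintro y ⟨⟨hvy, hyW⟩, hy⟩
    refine ⟨hvy, ?_⟩
    simp [π, hyW, hy]
end

section
/- Let 𝒰 be a finitely closed class of graphs, G a graph in the Schmidt closure of 𝒰 with rank r(G), and S a finite vertex set such that every component of G − S has rank less than r(G). Then for any finitely many components C₁,…,Cₙ of G − S, the induced subgraph G[S ∪ C₁ ∪ … ∪ Cₙ] has rank at most max_i r(C_i), and in particular rank strictly less than r(G). -/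
open Cardinal

universe u

/-- A class of graphs: a predicate on simple graphs over arbitrary vertex types in universe `u`. -/
def GraphClass : Type (u + 1) := ∀ (V : Type u), SimpleGraph V → Prop

/-- The component graph: the subgraph of `G` induced by a connected component `C` of `G - S`. -/
def CompGraph {V : Type u} (G : SimpleGraph V) (S : Set V)
    (C : (G.induce Sᶜ).ConnectedComponent) : SimpleGraph C.supp :=
  (G.induce Sᶜ).induce C.supp

/-- The Schmidt hierarchy: `SchmidtLevel 𝒰 0 = 𝒰`, and for `μ > 0` a graph `G` lies in
`SchmidtLevel 𝒰 μ` iff there is a finite vertex set `S` such that every component of `G - S`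
lies in `SchmidtLevel 𝒰 lam` for some `lam < μ`. -/
noncomputable def SchmidtLevel (𝒰 : GraphClass.{u}) (μ : Ordinal.{u}) : GraphClass.{u} :=
  fun V G =>
    if μ = 0 then 𝒰 V G
    else ∃ S : Set V, S.Finite ∧
      ∀ C : (G.induce Sᶜ).ConnectedComponent,
        ∃ lam : Ordinal.{u}, ∃ _ : lam < μ, SchmidtLevel 𝒰 lam C.supp (CompGraph G S C)
  termination_by μ
  decreasing_by exact ‹_›

/-- A graph belongs to the Schmidt closure of `𝒰` if it lies in some level of the hierarchy. -/
def InSchmidtClosure (𝒰 : GraphClass.{u}) {V : Type u} (G : SimpleGraph V) : Prop :=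
  ∃ μ : Ordinal.{u}, SchmidtLevel 𝒰 μ V G

/-- The rank of a graph in the Schmidt closure: the least level containing it. -/
noncomputable def SchmidtRank (𝒰 : GraphClass.{u}) {V : Type u} (G : SimpleGraph V) :
    Ordinal.{u} :=
  sInf {μ : Ordinal.{u} | SchmidtLevel 𝒰 μ V G}

/-- A class of graphs is finitely closed: it is closed under isomorphism, under finite (binary)
disjoint unions, and under adding finitely many new vertices joined arbitrarily to each other
and to the old vertices. -/
structure FinitelyClosed (𝒰 : GraphClass.{u}) : Prop where
  iso_closed : ∀ {V W : Type u} (G : SimpleGraph V) (H : SimpleGraph W),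
    Nonempty (G ≃g H) → 𝒰 V G → 𝒰 W H
  sum_mem : ∀ {V W : Type u} (G : SimpleGraph V) (H : SimpleGraph W),
    𝒰 V G → 𝒰 W H → 𝒰 (V ⊕ W) (G.sum H)
  addFinite_mem : ∀ {V : Type u} (G : SimpleGraph V) (T : Set V),
    T.Finite → 𝒰 (↑Tᶜ) (G.induce Tᶜ) → 𝒰 V G

/-!
Every level `𝒰(μ)` is itself finitely closed: for `μ > 0`, a deletion set for a disjoint union
is the union of deletion sets for its two sides (each component of a disjoint union is a
component of one side), and finitely many added vertices are simply added to the deletion set.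
Put `ν = maxᵢ r(Cᵢ)`. Each `Cᵢ` lies in `𝒰(ν)`: if `r(Cᵢ) < ν`, deleting nothing from the
connected graph `Cᵢ` leaves `Cᵢ` as its only component. (The levels need not increase with `μ`:
`𝒰` need not contain the components of its members.) So `G[S ∪ C₁ ∪ … ∪ Cₙ]`, built from the
`Cᵢ` by disjoint unions and by adding the finite set `S`, lies in `𝒰(ν)`, and `ν < r(G)`.
-/

namespace SimpleGraph

variable {V W : Type*} {G : SimpleGraph V} {H : SimpleGraph W}

def induceCongr (G : SimpleGraph V) {s t : Set V} (h : s = t) : G.induce s ≃g G.induce t where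
  toEquiv := Equiv.setCongr h
  map_rel_iff' := Iff.rfl

noncomputable def Embedding.isoInduceImage (f : G ↪g H) (s : Set V) :
    G.induce s ≃g H.induce (f '' s) where
  toEquiv := Equiv.Set.image f s f.injective
  map_rel_iff' := by simp

noncomputable def induceInduceIso (G : SimpleGraph V) (s : Set V) (t : Set s) :
    (G.induce s).induce t ≃g G.induce (Subtype.val '' t) :=
  (Embedding.induce s).isoInduceImage t

def Iso.induceSupp (e : G ≃g H) (C : G.ConnectedComponent) :
    G.induce C.supp ≃g H.induce (e.connectedComponentEquiv C).supp where
  toEquiv := ConnectedComponent.isoEquivSupp e C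
  map_rel_iff' := e.map_rel_iff

theorem Embedding.exists_reachable_of_reachable (f : G ↪g H)
    (hf : ∀ x y, H.Adj (f x) y → y ∈ Set.range f) {x : V} {y : W}
    (h : H.Reachable (f x) y) : ∃ z, G.Reachable x z ∧ f z = y := by
  obtain ⟨p⟩ := h
  generalize hu : f x = u at p
  induction p generalizing x with
  | nil => exact ⟨x, .rfl, hu⟩
  | @cons u v w huv p ih =>
    subst hu
    obtain ⟨x', rfl⟩ := hf x v huv
    obtain ⟨z, hz, rfl⟩ := ih rfl
    exact ⟨z, (f.map_adj_iff.1 huv).reachable.trans hz, rfl⟩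

theorem Embedding.supp_connectedComponentMk_eq_image (f : G ↪g H)
    (hf : ∀ x y, H.Adj (f x) y → y ∈ Set.range f) (x : V) :
    (H.connectedComponentMk (f x)).supp = f '' (G.connectedComponentMk x).supp := by
  ext y
  simp only [ConnectedComponent.mem_supp_iff, ConnectedComponent.eq, Set.mem_image]
  refine ⟨fun hy => ?_, fun ⟨z, hz, hzy⟩ => hzy ▸ hz.map f.toHom⟩
  obtain ⟨z, hz, rfl⟩ := f.exists_reachable_of_reachable hf hy.symm
  exact ⟨z, hz.symm, rfl⟩

noncomputable def Embedding.isoInduceSupp (f : G ↪g H)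
    (hf : ∀ x y, H.Adj (f x) y → y ∈ Set.range f) (x : V) :
    G.induce (G.connectedComponentMk x).supp ≃g H.induce (H.connectedComponentMk (f x)).supp :=
  (f.isoInduceImage _).trans (H.induceCongr (f.supp_connectedComponentMk_eq_image hf x).symm)

def sumInduceIso (s : Set (V ⊕ W)) :
    (G ⊕g H).induce s ≃g G.induce (Sum.inl ⁻¹' s) ⊕g H.induce (Sum.inr ⁻¹' s) where
  toEquiv := Equiv.subtypeSum
  map_rel_iff' := by rintro ⟨a | a, ha⟩ ⟨b | b, hb⟩ <;> rfl

noncomputable def sumIsoInduceUnion {s t : Set V} (hd : Disjoint s t)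
    (hst : ∀ a ∈ s, ∀ b ∈ t, ¬ G.Adj a b) :
    G.induce s ⊕g G.induce t ≃g G.induce (s ∪ t) := by
  classical
  exact
  { toEquiv := (Equiv.Set.union hd).symm
    map_rel_iff' := by
      rintro (⟨a, ha⟩ | ⟨a, ha⟩) (⟨b, hb⟩ | ⟨b, hb⟩) <;>
        simp [Equiv.Set.union_symm_apply_left, Equiv.Set.union_symm_apply_right]
      exacts [hst a ha b hb, fun h => hst b hb a ha h.symm] }

theorem ConnectedComponent.not_adj_of_ne {C D : G.ConnectedComponent} (h : C ≠ D) :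
    ∀ x ∈ C.supp, ∀ y ∈ D.supp, ¬ G.Adj x y := fun _ hx _ hy hxy =>
  h (hx.symm.trans ((ConnectedComponent.connectedComponentMk_eq_of_adj hxy).trans hy))

end SimpleGraph

open SimpleGraph

section FinitelyClosedClass

variable {𝒱 : GraphClass.{u}} {W : Type u}

theorem FinitelyClosed.induce_biUnion_supp_mem (h𝒱 : FinitelyClosed 𝒱) {K : SimpleGraph W}
    {t : Finset K.ConnectedComponent} (ht : t.Nonempty)
    (hmem : ∀ C ∈ t, 𝒱 C.supp (K.induce C.supp)) :
    𝒱 _ (K.induce (⋃ C ∈ t, C.supp)) := by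
  classical
  induction ht using Finset.Nonempty.cons_induction with
  | singleton C =>
    exact h𝒱.iso_closed _ _ ⟨K.induceCongr (by simp)⟩ (hmem C (by simp))
  | cons C t hC _ ih =>
    have hunion : C.supp ∪ ⋃ D ∈ t, D.supp = ⋃ D ∈ Finset.cons C t hC, D.supp := by
      rw [Finset.cons_eq_insert, Finset.set_biUnion_insert]
    have hne : ∀ D ∈ t, C ≠ D := fun D hD hCD => hC (hCD ▸ hD)
    have hd : Disjoint C.supp (⋃ D ∈ t, D.supp) := Set.disjoint_iUnion₂_right.2 fun D hD =>
      K.pairwise_disjoint_supp_connectedComponent (hne D hD)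
    have hst : ∀ a ∈ C.supp, ∀ b ∈ ⋃ D ∈ t, D.supp, ¬ K.Adj a b := fun a ha b hb => by
      obtain ⟨D, hD, hbD⟩ := Set.mem_iUnion₂.1 hb
      exact ConnectedComponent.not_adj_of_ne (hne D hD) a ha b hbD
    exact h𝒱.iso_closed _ _ ⟨(sumIsoInduceUnion hd hst).trans (K.induceCongr hunion)⟩
      (h𝒱.sum_mem _ _ (hmem C (by simp)) (ih fun D hD => hmem D (by simp [hD])))

theorem FinitelyClosed.induce_union_image_mem (h𝒱 : FinitelyClosed 𝒱) {G : SimpleGraph W}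
    {S : Set W} (hS : S.Finite) {B : Set ↥Sᶜ} (hB : 𝒱 _ ((G.induce Sᶜ).induce B)) :
    𝒱 _ (G.induce (S ∪ Subtype.val '' B)) := by
  refine h𝒱.addFinite_mem _ (Subtype.val ⁻¹' S) (hS.preimage Subtype.val_injective.injOn) ?_
  have hB' : Subtype.val '' (Subtype.val ⁻¹' S : Set ↥(S ∪ Subtype.val '' B))ᶜ =
      Subtype.val '' B := by
    rw [Set.image_compl_preimage, Subtype.range_coe, Set.union_sdiff_left, sdiff_eq_left,
      Set.disjoint_left]
    rintro _ ⟨⟨x, hx⟩, -, rfl⟩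
    exact hx
  exact h𝒱.iso_closed _ _ ⟨((G.induceInduceIso _ B).trans (G.induceCongr hB'.symm)).trans
    (G.induceInduceIso _ _).symm⟩ hB

end FinitelyClosedClass

section SchmidtHierarchy

variable {𝒰 : GraphClass.{u}} {μ : Ordinal.{u}} {V W : Type u}

def ComponentsBelow (𝒰 : GraphClass.{u}) (μ : Ordinal.{u}) (K : SimpleGraph W) : Prop :=
  ∀ C : K.ConnectedComponent, ∃ lam : Ordinal.{u}, ∃ _ : lam < μ,
    SchmidtLevel 𝒰 lam C.supp (K.induce C.supp)

theorem schmidtLevel_zero : SchmidtLevel 𝒰 0 = 𝒰 := by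
  funext V G
  rw [SchmidtLevel, if_pos rfl]

theorem schmidtLevel_iff_of_ne_zero (hμ : μ ≠ 0) (G : SimpleGraph V) :
    SchmidtLevel 𝒰 μ V G ↔ ∃ S : Set V, S.Finite ∧ ComponentsBelow 𝒰 μ (G.induce Sᶜ) := by
  rw [SchmidtLevel, if_neg hμ]
  rfl

theorem SchmidtLevel.of_iso (h𝒰 : FinitelyClosed 𝒰) {G : SimpleGraph V} {H : SimpleGraph W}
    (e : G ≃g H) (hG : SchmidtLevel 𝒰 μ V G) : SchmidtLevel 𝒰 μ W H := by
  induction μ using WellFoundedLT.induction generalizing V W with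
  | _ μ ih =>
  rcases eq_or_ne μ 0 with rfl | hμ
  · rw [schmidtLevel_zero] at hG ⊢
    exact h𝒰.iso_closed _ _ ⟨e⟩ hG
  obtain ⟨S, hS, hcomp⟩ := (schmidtLevel_iff_of_ne_zero hμ G).1 hG
  have hbij : Set.BijOn e Sᶜ (e '' S)ᶜ :=
    Set.image_compl_eq e.bijective ▸ e.injective.injOn.bijOn_image
  let e' : H.induce (e '' S)ᶜ ≃g G.induce Sᶜ := (e.induce hbij).symm
  refine (schmidtLevel_iff_of_ne_zero hμ H).2 ⟨e '' S, hS.image e, fun D => ?_⟩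
  obtain ⟨lam, hlam, hD⟩ := hcomp (e'.connectedComponentEquiv D)
  exact ⟨lam, hlam, ih lam hlam (e'.induceSupp D).symm hD⟩

theorem ComponentsBelow.of_iso (h𝒰 : FinitelyClosed 𝒰) {K : SimpleGraph V} {L : SimpleGraph W}
    (e : K ≃g L) (hK : ComponentsBelow 𝒰 μ K) : ComponentsBelow 𝒰 μ L := fun D =>
  let ⟨lam, hlam, hD⟩ := hK (e.symm.connectedComponentEquiv D)
  ⟨lam, hlam, hD.of_iso h𝒰 (e.symm.induceSupp D).symm⟩

theorem ComponentsBelow.sum (h𝒰 : FinitelyClosed 𝒰) {K : SimpleGraph V} {L : SimpleGraph W}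
    (hK : ComponentsBelow 𝒰 μ K) (hL : ComponentsBelow 𝒰 μ L) :
    ComponentsBelow 𝒰 μ (K ⊕g L) := by
  intro D
  obtain ⟨x | x, rfl⟩ := D.exists_rep
  · obtain ⟨lam, hlam, hx⟩ := hK (K.connectedComponentMk x)
    refine ⟨lam, hlam, hx.of_iso h𝒰 (Embedding.sumInl.isoInduceSupp ?_ x)⟩
    rintro a (b | b) hab
    exacts [⟨b, rfl⟩, by simp at hab]
  · obtain ⟨lam, hlam, hx⟩ := hL (L.connectedComponentMk x)
    refine ⟨lam, hlam, hx.of_iso h𝒰 (Embedding.sumInr.isoInduceSupp ?_ x)⟩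
    rintro a (b | b) hab
    exacts [by simp at hab, ⟨b, rfl⟩]

theorem ComponentsBelow.of_preconnected (h𝒰 : FinitelyClosed 𝒰) {K : SimpleGraph V}
    (hK : K.Preconnected) {lam : Ordinal.{u}} (h : SchmidtLevel 𝒰 lam V K) (hlam : lam < μ) :
    ComponentsBelow 𝒰 μ K := fun C =>
  have hC : C.supp = Set.univ := Set.eq_univ_of_forall fun _ =>
    @Subsingleton.elim _ hK.subsingleton_connectedComponent _ _
  ⟨lam, hlam, h.of_iso h𝒰 (K.induceUnivIso.symm.trans (K.induceCongr hC.symm))⟩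

theorem SchmidtLevel.of_componentsBelow (h𝒰 : FinitelyClosed 𝒰) (hμ : μ ≠ 0)
    {K : SimpleGraph V} (hK : ComponentsBelow 𝒰 μ K) : SchmidtLevel 𝒰 μ V K :=
  (schmidtLevel_iff_of_ne_zero hμ K).2 ⟨∅, Set.finite_empty,
    hK.of_iso h𝒰 (K.induceUnivIso.symm.trans (K.induceCongr Set.compl_empty.symm))⟩

theorem SchmidtLevel.of_preconnected_of_le (h𝒰 : FinitelyClosed 𝒰) {K : SimpleGraph V}
    (hK : K.Preconnected) {lam : Ordinal.{u}} (h : SchmidtLevel 𝒰 lam V K) (hlam : lam ≤ μ) :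
    SchmidtLevel 𝒰 μ V K := by
  rcases hlam.lt_or_eq with hlt | rfl
  · exact .of_componentsBelow h𝒰 hlt.ne_bot (.of_preconnected h𝒰 hK h hlt)
  · exact h

theorem FinitelyClosed.schmidtLevel (h𝒰 : FinitelyClosed 𝒰) (μ : Ordinal.{u}) :
    FinitelyClosed (SchmidtLevel 𝒰 μ) := by
  rcases eq_or_ne μ 0 with rfl | hμ
  · rwa [schmidtLevel_zero]
  refine ⟨fun G H ⟨e⟩ hG => hG.of_iso h𝒰 e, fun G H hG hH => ?_, fun G T hT hG => ?_⟩
  · obtain ⟨S, hS, hGS⟩ := (schmidtLevel_iff_of_ne_zero hμ G).1 hG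
    obtain ⟨T, hT, hHT⟩ := (schmidtLevel_iff_of_ne_zero hμ H).1 hH
    refine (schmidtLevel_iff_of_ne_zero hμ _).2
      ⟨Sum.inl '' S ∪ Sum.inr '' T, (hS.image _).union (hT.image _), ?_⟩
    refine (hGS.sum h𝒰 hHT).of_iso h𝒰 (Iso.symm ((sumInduceIso _).trans
      (Iso.sumCongr (G.induceCongr ?_) (H.induceCongr ?_)))) <;>
      simp [Set.preimage_image_eq _ Sum.inl_injective, Set.preimage_image_eq _ Sum.inr_injective]
  · obtain ⟨S, hS, hGS⟩ := (schmidtLevel_iff_of_ne_zero hμ _).1 hG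
    refine (schmidtLevel_iff_of_ne_zero hμ G).2
      ⟨T ∪ Subtype.val '' S, hT.union (hS.image _), hGS.of_iso h𝒰 ?_⟩
    refine (G.induceInduceIso Tᶜ Sᶜ).trans (G.induceCongr ?_)
    rw [Set.image_val_compl, Set.compl_union, Set.sdiff_eq]

theorem schmidtLevel_schmidtRank {G : SimpleGraph V} (hG : InSchmidtClosure 𝒰 G) :
    SchmidtLevel 𝒰 (SchmidtRank 𝒰 G) V G :=
  csInf_mem hG

theorem schmidtRank_le {G : SimpleGraph V} (hG : SchmidtLevel 𝒰 μ V G) : SchmidtRank 𝒰 G ≤ μ :=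
  csInf_le' hG

end SchmidtHierarchy

theorem rank_induce_finitelyManyComponents_general (𝒰 : GraphClass.{u}) (h𝒰 : FinitelyClosed 𝒰)
    {V : Type u} (G : SimpleGraph V)
    (S : Set V) (hS : S.Finite)
    (hcomp : ∀ C : (G.induce Sᶜ).ConnectedComponent,
      InSchmidtClosure 𝒰 (CompGraph G S C) ∧
        SchmidtRank 𝒰 (CompGraph G S C) < SchmidtRank 𝒰 G)
    (t : Finset ((G.induce Sᶜ).ConnectedComponent)) (ht : t.Nonempty) :
    SchmidtRank 𝒰 (G.induce (S ∪ ⋃ C ∈ t, (Subtype.val '' C.supp))) ≤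
        t.sup (fun C => SchmidtRank 𝒰 (CompGraph G S C)) ∧
      SchmidtRank 𝒰 (G.induce (S ∪ ⋃ C ∈ t, (Subtype.val '' C.supp))) <
        SchmidtRank 𝒰 G := by
  set ν := t.sup fun C => SchmidtRank 𝒰 (CompGraph G S C)
  have hν : ν < SchmidtRank 𝒰 G :=
    (Finset.sup_lt_iff (ht.elim fun C _ => zero_le.trans_lt (hcomp C).2)).2
      fun C _ => (hcomp C).2
  have hle : ∀ C ∈ t, SchmidtRank 𝒰 (CompGraph G S C) ≤ ν := fun _ hC =>
    Finset.le_sup (f := fun C => SchmidtRank 𝒰 (CompGraph G S C)) hC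
  have hcompν : ∀ C ∈ t, SchmidtLevel 𝒰 ν C.supp (CompGraph G S C) := fun C hC =>
    (schmidtLevel_schmidtRank (hcomp C).1).of_preconnected_of_le h𝒰
      C.connected_toSimpleGraph.preconnected (hle C hC)
  have hlevel := (h𝒰.schmidtLevel ν).induce_union_image_mem hS
    ((h𝒰.schmidtLevel ν).induce_biUnion_supp_mem ht hcompν)
  rw [Set.image_iUnion₂] at hlevel
  exact ⟨schmidtRank_le hlevel, (schmidtRank_le hlevel).trans_lt hν⟩

/-- Lemma 3(i): if `S` is a finite vertex set such that every component of `G - S` has rank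
less than `r(G)`, then for finitely many components `C₁, …, Cₙ` of `G - S` the induced
subgraph on `S` together with these components has rank at most `maxᵢ r(Cᵢ) < r(G)`. -/
theorem rank_induce_finitelyManyComponents (𝒰 : GraphClass.{u}) (h𝒰 : FinitelyClosed 𝒰)
    {V : Type u} (G : SimpleGraph V) (hG : InSchmidtClosure 𝒰 G)
    (S : Set V) (hS : S.Finite)
    (hcomp : ∀ C : (G.induce Sᶜ).ConnectedComponent,
      InSchmidtClosure 𝒰 (CompGraph G S C) ∧
        SchmidtRank 𝒰 (CompGraph G S C) < SchmidtRank 𝒰 G)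
    (t : Finset ((G.induce Sᶜ).ConnectedComponent)) (ht : t.Nonempty) :
    SchmidtRank 𝒰 (G.induce (S ∪ ⋃ C ∈ t, (Subtype.val '' C.supp))) ≤
        t.sup (fun C => SchmidtRank 𝒰 (CompGraph G S C)) ∧
      SchmidtRank 𝒰 (G.induce (S ∪ ⋃ C ∈ t, (Subtype.val '' C.supp))) <
        SchmidtRank 𝒰 G :=
  rank_induce_finitelyManyComponents_general 𝒰 h𝒰 G S hS hcomp t ht
end

section
/- Let G be a countable graph and U ⊆ V(G) such that only finitely many vertices in V(G) \ U have infinite degree in G. Then every partition π : U → {0,1} extends to a partition π' of V(G) in which every vertex of V(G) \ U is happy. -/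
/-!
Extend `π` to a colouring `σ` that is locally minimal: flipping a finite set `X` of finite-degree
vertices outside `U` never decreases the number of monochromatic edges at `X`. Such a `σ` is a
cluster point, in the compact space `V → Bool`, of colourings minimising the monochromatic edges
inside ever larger finite sets.

In a countable graph an unhappy vertex of infinite degree has only finitely many neighbours of the
other colour. So flipping the finite set `S` of unhappy infinite-degree vertices outside `U` makes
them happy, and keeps every infinite-degree vertex happy under any further flip of finitely many
other vertices. After flipping `S` the local minimality fails only through the finitely many
bichromatic edges at `S`, so the gain of flipping a finite set of finite-degree vertices outside
`U` is bounded below. A set of minimal gain leaves no such vertex `d` unhappy: flipping `d` as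
well would change the gain by twice the number of neighbours of `d` of the other colour minus those
of its own colour.
-/

open Cardinal

open Finset Filter Topology
open scoped Classical symmDiff

noncomputable section

lemma exists_min_image_of_forall_le {α : Type*} (f : α → ℤ) {s : Set α} (hs : s.Nonempty)
    {C : ℤ} (hC : ∀ a ∈ s, C ≤ f a) : ∃ a ∈ s, ∀ b ∈ s, f a ≤ f b := by
  obtain ⟨_, ⟨a, ha, rfl⟩, hmin⟩ := Int.exists_least_of_bdd (P := fun z => ∃ a ∈ s, f a = z)
    ⟨C, by rintro _ ⟨a, ha, rfl⟩; exact hC a ha⟩ (hs.elim fun a ha => ⟨f a, a, ha, rfl⟩)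
  exact ⟨a, ha, fun b hb => hmin _ ⟨b, hb, rfl⟩⟩

/-- For an edge with end colours `s, t`: `a, c` say whether its ends lie in `S`, and `b, e` whether
they lie in `X`. -/
lemma xor_interaction_bound (s t a b c e : Bool) :
    -2 * (if a ≠ c ∧ s ≠ t then 1 else 0 : ℤ) ≤
      (if (s ^^ a ^^ b) = (t ^^ c ^^ e) then 1 else 0) - (if (s ^^ a) = (t ^^ c) then 1 else 0)
        - (if (s ^^ b) = (t ^^ e) then 1 else 0) + (if s = t then 1 else 0) := by
  revert s t a b c e; decide

def flipOn {V : Type*} (X : Finset V) (σ : V → Bool) (y : V) : Bool := σ y ^^ decide (y ∈ X)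

section Flip

variable {V : Type*} {X Y : Finset V} {σ : V → Bool} {y : V}

lemma flipOn_of_mem (h : y ∈ X) : flipOn X σ y = !σ y := by simp [flipOn, h]

lemma flipOn_of_notMem (h : y ∉ X) : flipOn X σ y = σ y := by simp [flipOn, h]

lemma flipOn_ne_iff : flipOn X σ y ≠ σ y ↔ y ∈ X := by
  by_cases h : y ∈ X <;> simp [flipOn, h]

lemma flipOn_flipOn : flipOn X (flipOn Y σ) = flipOn (X ∆ Y) σ := by
  funext y
  by_cases hX : y ∈ X <;> by_cases hY : y ∈ Y <;> simp [flipOn, mem_symmDiff, hX, hY]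

end Flip

namespace SimpleGraph

variable {V : Type*} (G : SimpleGraph V)

def finNeighbors (x : V) : Finset V :=
  if h : (G.neighborSet x).Finite then h.toFinset else ∅

def closedNbhd (X : Finset V) : Finset V := X ∪ X.biUnion G.finNeighbors

def monoCount (R : Finset V) (σ : V → Bool) : ℤ :=
  ∑ p ∈ R ×ˢ R, if G.Adj p.1 p.2 ∧ σ p.1 = σ p.2 then 1 else 0

/-- When every vertex of `X` has finite degree, this is the change in the number of monochromatic
edges caused by flipping `X`, counted inside any region containing `closedNbhd X`
(`flipGain_eq_of_subset`). -/
def flipGain (X : Finset V) (σ : V → Bool) : ℤ :=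
  G.monoCount (G.closedNbhd X) (flipOn X σ) - G.monoCount (G.closedNbhd X) σ

variable {G} {X Y R : Finset V} {σ ρ : V → Bool} {x y d : V}

lemma mem_finNeighbors (hx : (G.neighborSet x).Finite) : y ∈ G.finNeighbors x ↔ G.Adj x y := by
  simp [finNeighbors, hx]

lemma subset_closedNbhd : X ⊆ G.closedNbhd X := subset_union_left

lemma mem_closedNbhd_of_adj (hx : x ∈ X) (hfin : (G.neighborSet x).Finite) (hadj : G.Adj x y) :
    y ∈ G.closedNbhd X :=
  mem_union_right _ (mem_biUnion.2 ⟨x, hx, (mem_finNeighbors hfin).2 hadj⟩)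

lemma closedNbhd_mono (h : X ⊆ Y) : G.closedNbhd X ⊆ G.closedNbhd Y :=
  union_subset_union h (biUnion_subset_biUnion_of_subset_left _ h)

lemma monoCount_nonneg : 0 ≤ G.monoCount R σ :=
  sum_nonneg fun _ _ => by split_ifs <;> norm_num

lemma monoCount_congr {σ₁ σ₂ : V → Bool} (h : ∀ x ∈ R, σ₁ x = σ₂ x) :
    G.monoCount R σ₁ = G.monoCount R σ₂ :=
  sum_congr rfl fun p hp => by rw [mem_product] at hp; rw [h _ hp.1, h _ hp.2]

lemma monoCount_sub_monoCount_of_subset {R₁ R₂ : Finset V} (hR : R₁ ⊆ R₂) {σ₁ σ₂ : V → Bool}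
    (h : ∀ x, σ₁ x ≠ σ₂ x → x ∈ R₁ ∧ ∀ y, G.Adj x y → y ∈ R₁) :
    G.monoCount R₂ σ₁ - G.monoCount R₂ σ₂ = G.monoCount R₁ σ₁ - G.monoCount R₁ σ₂ := by
  simp only [monoCount, ← sum_sub_distrib]
  refine (sum_subset (product_subset_product hR hR) fun p _ hp => ?_).symm
  by_cases hadj : G.Adj p.1 p.2
  · have h₁ : σ₁ p.1 = σ₂ p.1 := by
      by_contra hne
      exact hp (mem_product.2 ⟨(h _ hne).1, (h _ hne).2 _ hadj⟩)
    have h₂ : σ₁ p.2 = σ₂ p.2 := by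
      by_contra hne
      exact hp (mem_product.2 ⟨(h _ hne).2 _ hadj.symm, (h _ hne).1⟩)
    simp [h₁, h₂]
  · simp [hadj]

lemma flipGain_eq_of_subset (hX : ∀ x ∈ X, (G.neighborSet x).Finite) (hR : G.closedNbhd X ⊆ R) :
    G.flipGain X σ = G.monoCount R (flipOn X σ) - G.monoCount R σ :=
  (monoCount_sub_monoCount_of_subset hR fun x hx => by
    rw [flipOn_ne_iff] at hx
    exact ⟨subset_closedNbhd hx, fun y => mem_closedNbhd_of_adj hx (hX x hx)⟩).symm

lemma flipGain_symmDiff (hX : ∀ x ∈ X, (G.neighborSet x).Finite)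
    (hY : ∀ y ∈ Y, (G.neighborSet y).Finite) :
    G.flipGain (X ∆ Y) σ = G.flipGain X (flipOn Y σ) + G.flipGain Y σ := by
  have hXY : ∀ x ∈ X ∆ Y, (G.neighborSet x).Finite := fun x hx =>
    (mem_union.1 (symmDiff_subset_union hx)).elim (hX x) (hY x)
  rw [flipGain_eq_of_subset hXY (closedNbhd_mono (symmDiff_subset_union (s := X) (t := Y))),
    flipGain_eq_of_subset hX (closedNbhd_mono subset_union_left),
    flipGain_eq_of_subset hY (closedNbhd_mono subset_union_right), flipOn_flipOn]
  ring

lemma flipGain_singleton (hd : (G.neighborSet d).Finite) (ρ : V → Bool) :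
    G.flipGain {d} ρ = 2 * (({y ∈ G.closedNbhd {d} | G.Adj d y ∧ ρ y ≠ ρ d}.card : ℤ)
      - {y ∈ G.closedNbhd {d} | G.Adj d y ∧ ρ y = ρ d}.card) := by
  set h : V → ℤ := fun y =>
    (if G.Adj d y ∧ ρ y ≠ ρ d then 1 else 0) - (if G.Adj d y ∧ ρ y = ρ d then 1 else 0)
  have hdR : d ∈ G.closedNbhd {d} := subset_closedNbhd (mem_singleton_self d)
  -- only the pairs through `d` change, and they do so symmetrically
  have hpair : ∀ x y : V, (if G.Adj x y ∧ flipOn {d} ρ x = flipOn {d} ρ y then 1 else 0 : ℤ)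
      - (if G.Adj x y ∧ ρ x = ρ y then 1 else 0)
      = (if x = d then h y else 0) + (if y = d then h x else 0) := by
    intro x y
    by_cases hx : x = d <;> by_cases hy : y = d
    · subst hx hy; simp [h]
    · subst hx
      simp only [h, flipOn_of_mem (mem_singleton_self x), flipOn_of_notMem (notMem_singleton.2 hy)]
      by_cases hadj : G.Adj x y <;> cases ρ x <;> cases ρ y <;> simp [hadj, hy]
    · subst hy
      simp only [h, flipOn_of_mem (mem_singleton_self y), flipOn_of_notMem (notMem_singleton.2 hx)]
      rw [G.adj_comm x y]
      by_cases hadj : G.Adj y x <;> cases ρ x <;> cases ρ y <;> simp [hadj, hx]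
    · simp [flipOn_of_notMem (notMem_singleton.2 hx), flipOn_of_notMem (notMem_singleton.2 hy),
        hx, hy]
  calc G.flipGain {d} ρ
      = ∑ x ∈ G.closedNbhd {d}, ∑ y ∈ G.closedNbhd {d},
          ((if x = d then h y else 0) + (if y = d then h x else 0)) := by
        simp only [flipGain, monoCount, ← sum_sub_distrib, sum_product, hpair]
    _ = 2 * ∑ y ∈ G.closedNbhd {d}, h y := by
        rw [sum_comm]
        simp [Finset.sum_add_distrib, hdR, two_mul]
    _ = _ := by simp only [h, sum_sub_distrib, sum_boole]

lemma happy_of_flipGain_singleton_nonneg (hd : (G.neighborSet d).Finite)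
    (h : 0 ≤ G.flipGain {d} ρ) : Happy G ρ d := by
  rw [flipGain_singleton hd] at h
  have hset : ∀ (P : V → Prop) [DecidablePred P],
      {y | G.Adj d y ∧ P y} = ↑{y ∈ G.closedNbhd {d} | G.Adj d y ∧ P y} := fun P _ => by
    ext y
    simpa using fun hy _ => mem_closedNbhd_of_adj (mem_singleton_self d) hd hy
  rw [Happy, hset (ρ · = ρ d), hset (ρ · ≠ ρ d), coe_sort_coe,
    coe_sort_coe, mk_coe_finset, mk_coe_finset]
  exact_mod_cast (by linarith : ({y ∈ G.closedNbhd {d} | G.Adj d y ∧ ρ y = ρ d}.card : ℤ) ≤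
    {y ∈ G.closedNbhd {d} | G.Adj d y ∧ ρ y ≠ ρ d}.card)

theorem exists_flipGain_sub_le_flipGain_flipOn (σ : V → Bool) (S : Finset V)
    (hS : ∀ v ∈ S, {w | G.Adj v w ∧ σ w ≠ σ v}.Finite) :
    ∃ C : ℤ, ∀ X : Finset V, G.flipGain X σ - C ≤ G.flipGain X (flipOn S σ) := by
  obtain ⟨B, hB⟩ : ∃ B : Finset V, ∀ v ∈ S, ∀ w, G.Adj v w → σ w ≠ σ v → v ∈ B ∧ w ∈ B := by
    have hT := S.finite_toSet.biUnion hS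
    refine ⟨S ∪ hT.toFinset, fun v hv w hadj hne => ⟨mem_union_left _ hv, mem_union_right _ ?_⟩⟩
    simp only [Set.Finite.mem_toFinset, Set.mem_iUnion]
    exact ⟨v, hv, hadj, hne⟩
  refine ⟨2 * (B ×ˢ B).card, fun X => ?_⟩
  set R := G.closedNbhd X
  set t : V × V → ℤ := fun p =>
    (if G.Adj p.1 p.2 ∧ flipOn X (flipOn S σ) p.1 = flipOn X (flipOn S σ) p.2 then 1 else 0)
      - (if G.Adj p.1 p.2 ∧ flipOn S σ p.1 = flipOn S σ p.2 then 1 else 0)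
      - (if G.Adj p.1 p.2 ∧ flipOn X σ p.1 = flipOn X σ p.2 then 1 else 0)
      + (if G.Adj p.1 p.2 ∧ σ p.1 = σ p.2 then 1 else 0)
  have hgain : G.flipGain X (flipOn S σ) = G.flipGain X σ + ∑ p ∈ R ×ˢ R, t p := by
    simp only [flipGain, monoCount, t, Finset.sum_add_distrib, sum_sub_distrib]
    ring
  -- flipping `S` only affects the bichromatic edges at `S`, all of which lie in `B`
  have hpair : ∀ p ∈ R ×ˢ R, -2 * (if p ∈ B ×ˢ B then 1 else 0 : ℤ) ≤ t p := by
    rintro ⟨x, y⟩ -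
    by_cases hadj : G.Adj x y
    · have hb := xor_interaction_bound (σ x) (σ y) (decide (x ∈ S)) (decide (x ∈ X))
        (decide (y ∈ S)) (decide (y ∈ X))
      refine le_trans ?_ (hb.trans_eq (by simp only [t, hadj, true_and, flipOn]))
      have hxy : decide (x ∈ S) ≠ decide (y ∈ S) ∧ σ x ≠ σ y → (x, y) ∈ B ×ˢ B := by
        rintro ⟨hS', hne⟩
        by_cases hx : x ∈ S
        · exact mem_product.2 (hB x hx y hadj (Ne.symm hne))
        · have hy : y ∈ S := by simpa [hx] using hS'
          exact mem_product.2 (hB y hy x hadj.symm hne).symm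
      by_cases hc : decide (x ∈ S) ≠ decide (y ∈ S) ∧ σ x ≠ σ y
      · rw [if_pos (hxy hc), if_pos hc]
      · rw [if_neg hc]
        split_ifs <;> norm_num
    · simp only [t, hadj, false_and, if_false]
      split_ifs <;> norm_num
  have hcard : ({p ∈ R ×ˢ R | p ∈ B ×ˢ B}.card : ℤ) ≤ (B ×ˢ B).card :=
    Nat.cast_le.2 (card_le_card fun p hp => (mem_filter.1 hp).2)
  have hsum := sum_le_sum hpair
  rw [← mul_sum, sum_boole] at hsum
  linarith

theorem exists_extension_forall_flipGain_nonneg (U : Set V) (π : U → Bool) :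
    ∃ σ : V → Bool, (∀ u : U, σ u = π u) ∧
      ∀ X : Finset V, (∀ x ∈ X, x ∉ U ∧ (G.neighborSet x).Finite) → 0 ≤ G.flipGain X σ := by
  set E : Set (V → Bool) := {σ | ∀ u : U, σ u = π u}
  have hE : E.Nonempty := ⟨fun x => if h : x ∈ U then π ⟨x, h⟩ else false, fun u => by simp⟩
  choose p hpE hpmin using fun R : Finset V =>
    exists_min_image_of_forall_le (G.monoCount R) hE fun _ _ => monoCount_nonneg
  obtain ⟨σ, -, hσ⟩ := isCompact_univ.exists_clusterPt (f := map p atTop) (by simp)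
  have hagree : ∀ R₀ : Finset V, ∃ R, R₀ ⊆ R ∧ ∀ x ∈ R₀, p R x = σ x := by
    intro R₀
    have hnhds : ∀ᶠ ρ in 𝓝 σ, ∀ x ∈ R₀, ρ x = σ x := (eventually_all_finset R₀).2 fun x _ =>
      tendsto_pure.1 (by simpa [nhds_discrete] using (continuous_apply x).tendsto σ)
    obtain ⟨R, hRσ, hR⟩ :=
      ((mapClusterPt_iff_frequently.1 hσ _ hnhds).and_eventually (eventually_ge_atTop R₀)).exists
    exact ⟨R, hR, hRσ⟩
  refine ⟨σ, fun u => ?_, fun X hX => ?_⟩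
  · obtain ⟨R, -, hR⟩ := hagree {(u : V)}
    rw [← hR u (mem_singleton_self _), hpE R u]
  · obtain ⟨R, hR, hRσ⟩ := hagree (G.closedNbhd X)
    have hflipE : flipOn X (p R) ∈ E := fun u => by
      rw [flipOn_of_notMem fun hu => (hX _ hu).1 u.2, hpE R u]
    calc 0 ≤ G.monoCount R (flipOn X (p R)) - G.monoCount R (p R) :=
          sub_nonneg.2 (hpmin R _ hflipE)
      _ = G.flipGain X (p R) := (flipGain_eq_of_subset (fun x hx => (hX x hx).2) hR).symm
      _ = G.flipGain X σ := by
        rw [flipGain, flipGain, monoCount_congr hRσ,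
          monoCount_congr (σ₂ := flipOn X σ) fun x hx => by simp only [flipOn, hRσ x hx]]

theorem exists_forall_flipGain_singleton_nonneg (τ : V → Bool) {D : Set V}
    (hD : ∀ d ∈ D, (G.neighborSet d).Finite) {C : ℤ}
    (hC : ∀ X : Finset V, ↑X ⊆ D → C ≤ G.flipGain X τ) :
    ∃ X : Finset V, ↑X ⊆ D ∧ ∀ d ∈ D, 0 ≤ G.flipGain {d} (flipOn X τ) := by
  obtain ⟨X, hXD, hmin⟩ := exists_min_image_of_forall_le (G.flipGain · τ)
    (s := {X : Finset V | (X : Set V) ⊆ D}) ⟨∅, by simp⟩ fun X hX => hC X hX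
  refine ⟨X, hXD, fun d hd => ?_⟩
  have hdX : ↑({d} ∆ X) ⊆ D := fun x hx => by
    rcases mem_union.1 (symmDiff_subset_union (mem_coe.1 hx)) with h | h
    · rwa [mem_singleton.1 h]
    · exact hXD h
  have := hmin _ hdX
  rw [flipGain_symmDiff (by simpa using hD d hd) fun x hx => hD x (hXD hx)] at this
  linarith

end SimpleGraph

section Happy

variable {V : Type*} {G : SimpleGraph V} {ρ : V → Bool} {v : V} {X : Finset V}

lemma happy_of_infinite [Countable V] (h : {y | G.Adj v y ∧ ρ y ≠ ρ v}.Infinite) : Happy G ρ v :=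
  mk_le_aleph0.trans (aleph0_le_mk_iff.2 h.to_subtype)

lemma neighborSet_subset_union (ρ : V → Bool) (v : V) :
    G.neighborSet v ⊆ {y | G.Adj v y ∧ ρ y = ρ v} ∪ {y | G.Adj v y ∧ ρ y ≠ ρ v} := fun y hy => by
  by_cases h : ρ y = ρ v
  · exact Or.inl ⟨hy, h⟩
  · exact Or.inr ⟨hy, h⟩

lemma Happy.infinite_adj_ne (h : Happy G ρ v) (hv : (G.neighborSet v).Infinite) :
    {y | G.Adj v y ∧ ρ y ≠ ρ v}.Infinite := fun hopp =>
  hv (((lt_aleph0_iff_set_finite.1 (h.trans_lt hopp.lt_aleph0)).union hopp).subset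
    (neighborSet_subset_union ρ v))

lemma infinite_adj_eq_of_not_happy [Countable V] (h : ¬ Happy G ρ v)
    (hv : (G.neighborSet v).Infinite) : {y | G.Adj v y ∧ ρ y = ρ v}.Infinite := fun hsame =>
  hv ((hsame.union (Set.not_infinite.1 (mt happy_of_infinite h))).subset
    (neighborSet_subset_union ρ v))

lemma happy_flipOn_of_happy [Countable V] (h : Happy G ρ v) (hv : (G.neighborSet v).Infinite)
    (hvX : v ∉ X) : Happy G (flipOn X ρ) v := by
  refine happy_of_infinite (((h.infinite_adj_ne hv).sdiff X.finite_toSet).mono ?_)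
  rintro y ⟨⟨hadj, hne⟩, hyX⟩
  exact ⟨hadj, by rwa [flipOn_of_notMem hyX, flipOn_of_notMem hvX]⟩

lemma happy_flipOn_of_not_happy [Countable V] (h : ¬ Happy G ρ v)
    (hv : (G.neighborSet v).Infinite) (hvX : v ∈ X) : Happy G (flipOn X ρ) v := by
  refine happy_of_infinite (((infinite_adj_eq_of_not_happy h hv).sdiff X.finite_toSet).mono ?_)
  rintro y ⟨⟨hadj, heq⟩, hyX⟩
  refine ⟨hadj, ?_⟩
  rw [flipOn_of_notMem hyX, flipOn_of_mem hvX, heq]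
  cases ρ v <;> decide

end Happy

end

open SimpleGraph in
/-- Lemma of Aharoni, Milner and Prikry: if `G` is countable and only finitely many vertices
outside `U` have infinite degree, then every two-colouring of `U` extends to a two-colouring of
`G` in which every vertex outside `U` is happy. -/
theorem AMP_extension {V : Type*} [Countable V] (G : SimpleGraph V) (U : Set V)
    (hfin : {v : V | v ∉ U ∧ (G.neighborSet v).Infinite}.Finite) (π : U → Bool) :
    ∃ π' : V → Bool, (∀ u : U, π' u = π u) ∧ ∀ v ∉ U, Happy G π' v := by
  obtain ⟨σ, hσU, hσgain⟩ := G.exists_extension_forall_flipGain_nonneg U π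
  set S := {v ∈ hfin.toFinset | ¬ Happy G σ v}
  have hS : ∀ v ∈ S, (v ∉ U ∧ (G.neighborSet v).Infinite) ∧ ¬ Happy G σ v := fun v hv => by
    simpa [S] using hv
  obtain ⟨C, hC⟩ := G.exists_flipGain_sub_le_flipGain_flipOn σ S fun v hv =>
    Set.not_infinite.1 (mt happy_of_infinite (hS v hv).2)
  obtain ⟨X, hXD, hX⟩ := G.exists_forall_flipGain_singleton_nonneg (flipOn S σ)
    (D := {v | v ∉ U ∧ (G.neighborSet v).Finite}) (fun d hd => hd.2) (C := -C)
    fun X hXD => by linarith [hσgain X hXD, hC X]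
  refine ⟨flipOn X (flipOn S σ), fun u => ?_, fun v hv => ?_⟩
  · rw [flipOn_of_notMem fun h => (hXD h).1 u.2, flipOn_of_notMem fun h => (hS u h).1.1 u.2, hσU]
  by_cases hvfin : (G.neighborSet v).Finite
  · exact happy_of_flipGain_singleton_nonneg hvfin (hX v ⟨hv, hvfin⟩)
  refine happy_flipOn_of_happy ?_ hvfin fun h => hvfin (hXD h).2
  by_cases hvS : v ∈ S
  · exact happy_flipOn_of_not_happy (hS v hvS).2 hvfin hvS
  · refine happy_flipOn_of_happy (by_contra fun h => hvS ?_) hvfin hvS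
    exact mem_filter.2 ⟨hfin.mem_toFinset.2 ⟨hv, hvfin⟩, h⟩
end

section
/- If a countable graph G does not lie in the Schmidt closure of the class 𝒲, then it contains a comb with all teeth in V*(G). Concretely: one can recursively choose components C₀ ⊇ C₁ ⊇ …, vertices vᵢ ∈ V*(G) ∩ Cᵢ, and paths Pᵢ whose union is a comb with teeth v₀, v₁, …. -/
open Cardinal

/-- The set of vertices of infinite degree in `G`. -/
def Vinf {V : Type*} (G : SimpleGraph V) : Set V := {v : V | (G.neighborSet v).Infinite}

/-- The set of vertices of infinite degree having only finitely many neighbours of infinite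
degree. -/
def Vstar {V : Type*} (G : SimpleGraph V) : Set V :=
  {v : V | (G.neighborSet v).Infinite ∧ (G.neighborSet v ∩ Vinf G).Finite}

/-- `G` contains a comb with all teeth in `A`: a ray `r` together with infinitely many pairwise
disjoint finite paths, the `n`-th path going from the vertex `r (k n)` of the ray to a tooth
`t n ∈ A`, each path meeting the ray exactly in its first vertex. -/
def HasCombWithTeethIn {V : Type*} (G : SimpleGraph V) (A : Set V) : Prop :=
  ∃ (r : ℕ → V) (k : ℕ → ℕ) (t : ℕ → V) (p : ∀ n : ℕ, G.Walk (r (k n)) (t n)),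
    Function.Injective r ∧ (∀ n : ℕ, G.Adj (r n) (r (n + 1))) ∧
    StrictMono k ∧ (∀ n : ℕ, t n ∈ A) ∧ (∀ n : ℕ, (p n).IsPath) ∧
    (∀ m n : ℕ, m ≠ n → ∀ v : V, v ∈ (p m).support → v ∉ (p n).support) ∧
    (∀ n : ℕ, ∀ v ∈ (p n).support, (∃ i : ℕ, v = r i) → v = r (k n))

universe u

/-- The class 𝒲 of countable graphs `G` with `Vstar G` finite. -/
def Wclass : GraphClass.{u} := fun V G => Countable V ∧ (Vstar G).Finite

/-!
If `G` is not in the Schmidt closure of `𝒲`, then for every finite `S` some component of `G - S`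
is not either, and, `G` being countable, `V*(G)` is infinite. We build components
`X₀ ⊇ X₁ ⊇ ⋯` outside the closure, each vertex of `Xᵢ` having only finitely many neighbours
outside `Xᵢ`, together with growing paths `P₀ ⊆ P₁ ⊆ ⋯` such that `Pᵢ` meets `Xᵢ` only in its
last vertex `xᵢ`. The finiteness condition gives `V*(G[Xᵢ]) ⊆ V*(G)`, so there is a path `R`
inside `Xᵢ` from `xᵢ` to some `vᵢ ∈ V*(G)`. Let `Xᵢ₊₁` be a component of `G[Xᵢ] - R` outside the
closure; as `G[Xᵢ]` is connected, an edge `dc` joins some `d ∈ R` to some `c ∈ Xᵢ₊₁`. Put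
`Pᵢ₊₁ = Pᵢ R[xᵢ, d] c` and take `R[d, vᵢ] ⊆ Xᵢ \ Xᵢ₊₁` as the `i`-th tooth path: these paths are
pairwise disjoint and meet the ray `⋃ Pᵢ` only in their first vertex.
-/

open SimpleGraph

namespace SimpleGraph.Iso

variable {V W : Type*} {G : SimpleGraph V} {H : SimpleGraph W}

theorem apply_mem_vinf_iff (e : G ≃g H) {v : V} : e v ∈ Vinf H ↔ v ∈ Vinf G := by
  simp only [Vinf, Set.mem_ofPred_eq, ← e.image_neighborSet,
    Set.infinite_image_iff e.injective.injOn]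

theorem image_vinf (e : G ≃g H) : e '' Vinf G = Vinf H :=
  Set.ext fun w => by
    rw [← e.apply_symm_apply w, e.injective.mem_set_image, e.apply_mem_vinf_iff]

theorem apply_mem_vstar_iff (e : G ≃g H) {v : V} : e v ∈ Vstar H ↔ v ∈ Vstar G := by
  simp only [Vstar, Set.mem_ofPred_eq, ← e.image_neighborSet,
    Set.infinite_image_iff e.injective.injOn, ← image_vinf e, ← Set.image_inter e.injective,
    Set.finite_image_iff e.injective.injOn]

theorem image_vstar (e : G ≃g H) : e '' Vstar G = Vstar H :=
  Set.ext fun w => by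
    rw [← e.apply_symm_apply w, e.injective.mem_set_image, e.apply_mem_vstar_iff]

def induceCompl (e : G ≃g H) (S : Set V) : G.induce Sᶜ ≃g H.induce (e '' S)ᶜ where
  toEquiv := e.toEquiv.subtypeEquiv fun v => by simp
  map_rel_iff' := by simp [e.map_adj_iff]

def induceSupp_s18 (e : G ≃g H) (C : G.ConnectedComponent) :
    G.induce C.supp ≃g H.induce (e.connectedComponentEquiv C).supp where
  toEquiv := ConnectedComponent.isoEquivSupp e C
  map_rel_iff' := by simp [ConnectedComponent.isoEquivSupp, e.map_adj_iff]

end SimpleGraph.Iso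

def GraphClass.IsoInvariant (𝒰 : GraphClass.{u}) : Prop :=
  ∀ ⦃V W : Type u⦄ ⦃G : SimpleGraph V⦄ ⦃H : SimpleGraph W⦄, G ≃g H → 𝒰 V G → 𝒰 W H

theorem wclass_isoInvariant : Wclass.IsoInvariant := fun _ _ _ _ e ⟨hV, hfin⟩ =>
  ⟨e.toEquiv.countable_iff.mp hV, e.image_vstar ▸ hfin.image e⟩

namespace GraphClass.IsoInvariant

variable {𝒰 : GraphClass.{u}}

theorem schmidtLevel (h𝒰 : 𝒰.IsoInvariant) (μ : Ordinal.{u}) :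
    (SchmidtLevel 𝒰 μ).IsoInvariant := by
  induction μ using WellFoundedLT.induction with
  | _ μ ih =>
    intro V W G H e hG
    rw [SchmidtLevel] at hG ⊢
    split_ifs at hG ⊢ with hμ
    · exact h𝒰 e hG
    · obtain ⟨S, hS, hcomp⟩ := hG
      refine ⟨e '' S, hS.image e, fun C' => ?_⟩
      obtain ⟨C, rfl⟩ := (e.induceCompl S).connectedComponentEquiv.surjective C'
      obtain ⟨lam, hlam, hC⟩ := hcomp C
      exact ⟨lam, hlam, ih lam hlam ((e.induceCompl S).induceSupp_s18 C) hC⟩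

theorem inSchmidtClosure (h𝒰 : 𝒰.IsoInvariant) {V W : Type u} {G : SimpleGraph V}
    {H : SimpleGraph W} (e : G ≃g H) (hG : InSchmidtClosure 𝒰 G) : InSchmidtClosure 𝒰 H :=
  let ⟨μ, hμ⟩ := hG
  ⟨μ, h𝒰.schmidtLevel μ e hμ⟩

end GraphClass.IsoInvariant

section Closure

variable {𝒰 : GraphClass.{u}} {V : Type u} {G : SimpleGraph V}

theorem exists_component_not_inSchmidtClosure (hG : ¬ InSchmidtClosure 𝒰 G) {S : Set V}
    (hS : S.Finite) : ∃ C, ¬ InSchmidtClosure 𝒰 (CompGraph G S C) := by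
  by_contra! h
  choose f hf using h
  refine hG ⟨Order.succ (⨆ C, f C), ?_⟩
  rw [SchmidtLevel, if_neg (by simp)]
  exact ⟨S, hS, fun C => ⟨f C, Order.lt_succ_of_le (Ordinal.le_iSup f C), hf C⟩⟩

theorem vstar_infinite_of_not_inSchmidtClosure [Countable V]
    (hG : ¬ InSchmidtClosure Wclass G) : (Vstar G).Infinite :=
  fun hfin => hG ⟨0, by rw [SchmidtLevel, if_pos rfl]; exact ⟨‹_›, hfin⟩⟩

theorem exists_component_diff_not_inSchmidtClosure (h𝒰 : 𝒰.IsoInvariant) {X s : Set V}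
    (hX : ¬ InSchmidtClosure 𝒰 (G.induce X)) (hs : s.Finite) :
    ∃ Y ⊆ X \ s, Y.Nonempty ∧ (G.induce Y).Preconnected ∧
      ¬ InSchmidtClosure 𝒰 (G.induce Y) ∧ ∀ v ∈ Y, ∀ w ∈ X \ s, G.Adj v w → w ∈ Y := by
  obtain ⟨C, hC⟩ :=
    exists_component_not_inSchmidtClosure hX (hs.preimage Subtype.val_injective.injOn)
  let ι : C.supp → V := fun a => a.1.1.1
  have hι : ι.Injective := fun a b h => Subtype.ext <| Subtype.ext <| Subtype.ext h
  -- `CompGraph (G.induce X) _ C` is `G.comap ι` by definition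
  let e : CompGraph (G.induce X) _ C ≃g G.induce (Set.range ι) :=
    { toEquiv := Equiv.ofInjective ι hι, map_rel_iff' := Iff.rfl }
  refine ⟨Set.range ι, ?_, @Set.range_nonempty _ _ C.nonempty_supp.to_subtype ι,
    e.preconnected_iff.mp C.connected_toSimpleGraph.preconnected,
    fun h => hC (h𝒰.inSchmidtClosure e.symm h), ?_⟩
  · rintro _ ⟨a, rfl⟩
    exact ⟨a.1.1.2, a.1.2⟩
  · rintro _ ⟨a, rfl⟩ w ⟨hwX, hws⟩ hadj
    exact ⟨⟨⟨⟨w, hwX⟩, hws⟩, C.mem_supp_of_adj_mem_supp a.2 hadj⟩, rfl⟩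

end Closure

section InducedSubgraph

variable {V : Type*} {G : SimpleGraph V} {X : Set V}

theorem exists_isPath_of_preconnected_induce (hX : (G.induce X).Preconnected) {a b : V}
    (ha : a ∈ X) (hb : b ∈ X) : ∃ p : G.Walk a b, p.IsPath ∧ ∀ z ∈ p.support, z ∈ X := by
  classical
  obtain ⟨p⟩ := hX ⟨a, ha⟩ ⟨b, hb⟩
  refine ⟨p.bypass.map (Embedding.induce X).toHom,
    p.bypass_isPath.map (Embedding.induce (G := G) X).injective, ?_⟩
  intro z hz
  obtain ⟨z, -, rfl⟩ :=
    List.mem_map.mp <| show z ∈ p.bypass.support.map (Embedding.induce X).toHom by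
      rwa [← Walk.support_map]
  exact z.2

theorem exists_adj_of_preconnected_induce (hX : (G.induce X).Preconnected) {Y : Set V}
    (hYX : Y ⊆ X) (hY : Y.Nonempty) {a : V} (ha : a ∈ X \ Y) : ∃ d ∈ X \ Y, ∃ c ∈ Y, G.Adj d c := by
  obtain ⟨y, hy⟩ := hY
  obtain ⟨p, -, hpX⟩ := exists_isPath_of_preconnected_induce hX ha.1 (hYX hy)
  obtain ⟨dt, hdt, hfst, hsnd⟩ := p.exists_boundary_dart Yᶜ ha.2 (not_not.mpr hy)
  exact ⟨dt.fst, ⟨hpX _ (p.dart_fst_mem_support_of_mem_darts hdt), hfst⟩, dt.snd,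
    not_not.mp hsnd, dt.adj⟩

theorem infinite_neighborSet_induce_iff {v : V} (hv : v ∈ X) (hfin : (G.neighborSet v \ X).Finite) :
    ((G.induce X).neighborSet ⟨v, hv⟩).Infinite ↔ (G.neighborSet v).Infinite := by
  rw [← Set.infinite_image_iff Subtype.val_injective.injOn, neighborSet_induce,
    Subtype.image_preimage_coe, Set.inter_comm]
  refine ⟨fun h => h.mono Set.inter_subset_left, fun h => ?_⟩
  rw [← Set.sdiff_sdiff_right_self]
  exact h.sdiff hfin

theorem mem_vstar_of_mem_vstar_induce (hX : ∀ v ∈ X, (G.neighborSet v \ X).Finite) {a : X}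
    (ha : a ∈ Vstar (G.induce X)) : (a : V) ∈ Vstar G := by
  obtain ⟨hinf, hfin⟩ := ha
  refine ⟨(infinite_neighborSet_induce_iff a.2 (hX a a.2)).mp hinf,
    ((hX a a.2).union (hfin.image Subtype.val)).subset ?_⟩
  rintro w ⟨hwa, hw⟩
  by_cases hwX : w ∈ X
  · exact Or.inr ⟨⟨w, hwX⟩, ⟨hwa, (infinite_neighborSet_induce_iff hwX (hX w hwX)).mpr hw⟩, rfl⟩
  · exact Or.inl ⟨hwa, hwX⟩

end InducedSubgraph

theorem vstar_inter_infinite {V : Type u} [Countable V] {G : SimpleGraph V} {X : Set V}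
    (hX : ¬ InSchmidtClosure Wclass (G.induce X))
    (hXfin : ∀ v ∈ X, (G.neighborSet v \ X).Finite) : (Vstar G ∩ X).Infinite :=
  ((vstar_infinite_of_not_inSchmidtClosure hX).image Subtype.val_injective.injOn).mono <| by
    rintro _ ⟨a, ha, rfl⟩
    exact ⟨mem_vstar_of_mem_vstar_induce hXfin ha, a.2⟩

theorem SimpleGraph.Walk.IsPath.append {V : Type*} {G : SimpleGraph V} {u v w : V}
    {p : G.Walk u v} {q : G.Walk v w} (hp : p.IsPath) (hq : q.IsPath)
    (hpq : ∀ z ∈ p.support, z ∈ q.support → z = v) : (p.append q).IsPath := by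
  have hv : v ∉ q.support.tail := by
    have := hq.support_nodup
    rw [← q.cons_tail_support, List.nodup_cons] at this
    exact this.1
  rw [Walk.isPath_def, Walk.support_append, List.nodup_append]
  refine ⟨hp.support_nodup, hq.support_nodup.sublist q.support.tail_sublist, ?_⟩
  rintro z hzp _ hzq rfl
  exact hv (hpq z hzp (List.mem_of_mem_tail hzq) ▸ hzq)

theorem SimpleGraph.Walk.IsPath.eq_of_mem_takeUntil_of_mem_dropUntil {V : Type*}
    {G : SimpleGraph V} [DecidableEq V] {u v d z : V} {p : G.Walk u v} (hp : p.IsPath)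
    (hd : d ∈ p.support) (hzT : z ∈ (p.takeUntil d hd).support)
    (hzD : z ∈ (p.dropUntil d hd).support) : z = d := by
  by_contra hne
  exact ((p.take_spec hd).symm ▸ hp).ne_of_mem_support_of_append hne hzT hzD rfl

section NestedPaths

variable {V : Type*} {G : SimpleGraph V} {x₀ : V} {y : ℕ → V} {P : ∀ n, G.Walk x₀ (y n)}
  {W : ∀ n, G.Walk (y n) (y (n + 1))}

theorem length_le_of_append (hP : ∀ n, P (n + 1) = (P n).append (W n)) {n m : ℕ} (hnm : n ≤ m) :
    (P n).length ≤ (P m).length := by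
  induction m, hnm using Nat.le_induction with
  | base => rfl
  | succ m _ ih => rw [hP, Walk.length_append]; omega

theorem getVert_eq_of_append (hP : ∀ n, P (n + 1) = (P n).append (W n)) {n m : ℕ} (hnm : n ≤ m)
    {i : ℕ} (hi : i ≤ (P n).length) : (P m).getVert i = (P n).getVert i := by
  induction m, hnm using Nat.le_induction with
  | base => rfl
  | succ m hnm ih =>
    rw [hP, Walk.getVert_append', if_pos (hi.trans (length_le_of_append hP hnm)), ih]

theorem mem_support_or_mem_of_append (hP : ∀ n, P (n + 1) = (P n).append (W n)) {X : ℕ → Set V}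
    (hX : Antitone X) (hWX : ∀ n, ∀ z ∈ (W n).support, z ∈ X n) {n m : ℕ} (hnm : n ≤ m) {z : V}
    (hz : z ∈ (P m).support) : z ∈ (P n).support ∨ z ∈ X n := by
  induction m, hnm using Nat.le_induction with
  | base => exact Or.inl hz
  | succ m hnm ih =>
    rw [hP, Walk.mem_support_append_iff] at hz
    rcases hz with hz | hz
    · exact ih hz
    · exact Or.inr (hX hnm (hWX m z hz))

theorem getVert_self_eq_of_append (hP : ∀ n, P (n + 1) = (P n).append (W n))
    (hlen : ∀ n, n ≤ (P n).length) {i n : ℕ} (hi : i ≤ (P n).length) :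
    (P i).getVert i = (P n).getVert i := by
  rcases le_total i n with h | h
  · exact (getVert_eq_of_append hP h (hlen i)).symm
  · exact getVert_eq_of_append hP h hi

theorem injective_getVert_self_of_append (hP : ∀ n, P (n + 1) = (P n).append (W n))
    (hlen : ∀ n, n ≤ (P n).length) (hpath : ∀ n, (P n).IsPath) :
    Function.Injective fun i => (P i).getVert i := by
  intro a b hab
  have hle : ∀ i ≤ max a b, i ≤ (P (max a b)).length := fun i hi => hi.trans (hlen _)
  simp only [getVert_self_eq_of_append hP hlen (hle a (le_max_left a b)),
    getVert_self_eq_of_append hP hlen (hle b (le_max_right a b))] at hab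
  exact (hpath _).getVert_injOn (hle a (le_max_left a b)) (hle b (le_max_right a b)) hab

theorem adj_getVert_self_of_append (hP : ∀ n, P (n + 1) = (P n).append (W n))
    (hlen : ∀ n, n ≤ (P n).length) (i : ℕ) :
    G.Adj ((P i).getVert i) ((P (i + 1)).getVert (i + 1)) := by
  rw [getVert_self_eq_of_append hP hlen ((Nat.le_succ i).trans (hlen (i + 1)))]
  exact (P (i + 1)).adj_getVert_succ (hlen (i + 1))

end NestedPaths

theorem hasCombWithTeethIn_of_append {V : Type*} {G : SimpleGraph V} {A : Set V} {x₀ : V}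
    {y : ℕ → V} {P : ∀ n, G.Walk x₀ (y n)} {W : ∀ n, G.Walk (y n) (y (n + 1))}
    (hP : ∀ n, P (n + 1) = (P n).append (W n)) (hpath : ∀ n, (P n).IsPath)
    {X : ℕ → Set V} (hX : Antitone X) (hWX : ∀ n, ∀ z ∈ (W n).support, z ∈ X n)
    {k : ℕ → ℕ} (hk : ∀ n, (P n).length ≤ k n ∧ k n < (P (n + 1)).length)
    {t : ℕ → V} (ht : ∀ n, t n ∈ A) (q : ∀ n, G.Walk ((P (n + 1)).getVert (k n)) (t n))
    (hq : ∀ n, (q n).IsPath) (hqX : ∀ n, ∀ z ∈ (q n).support, z ∈ X n \ X (n + 1))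
    (hqP : ∀ n, ∀ z ∈ (q n).support, z ∈ (P (n + 1)).support → z = (P (n + 1)).getVert (k n)) :
    HasCombWithTeethIn G A := by
  have hlen : ∀ n, n ≤ (P n).length :=
    (strictMono_nat_of_lt_succ fun n => (hk n).1.trans_lt (hk n).2).id_le
  have hr : ∀ {i n}, i ≤ (P n).length → (P i).getVert i = (P n).getVert i :=
    getVert_self_eq_of_append hP hlen
  have hrk : ∀ n, (P (n + 1)).getVert (k n) = (P (k n)).getVert (k n) := fun n =>
    (hr (hk n).2.le).symm
  refine ⟨fun i => (P i).getVert i, k, t, fun n => (q n).copy (hrk n) rfl,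
    injective_getVert_self_of_append hP hlen hpath, adj_getVert_self_of_append hP hlen,
    strictMono_nat_of_lt_succ fun n => (hk n).2.trans_le (hk (n + 1)).1, ht,
    fun n => (Walk.isPath_copy _ _ _).mpr (hq n), ?_, ?_⟩
  · intro m n hmn z hzm hzn
    rw [Walk.support_copy] at hzm hzn
    rcases hmn.lt_or_gt with h | h
    · exact (hqX m z hzm).2 (hX h (hqX n z hzn).1)
    · exact (hqX n z hzn).2 (hX h (hqX m z hzm).1)
  · rintro n _ hz ⟨i, rfl⟩
    rw [Walk.support_copy] at hz
    have hi : i ≤ (P (i + n + 1)).length := (by omega : i ≤ i + n + 1).trans (hlen _)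
    have hmem := hr hi ▸ (P (i + n + 1)).getVert_mem_support i
    rcases mem_support_or_mem_of_append hP hX hWX (by omega : n + 1 ≤ i + n + 1) hmem with h | h
    · exact (hqP n _ hz h).trans (hrk n)
    · exact absurd h (hqX n _ hz).2

theorem finite_neighborSet_diff_of_closed {V : Type*} {G : SimpleGraph V} {X Y s : Set V} {v : V}
    (hX : (G.neighborSet v \ X).Finite) (hs : s.Finite) (hY : ∀ w ∈ X \ s, G.Adj v w → w ∈ Y) :
    (G.neighborSet v \ Y).Finite :=
  (hX.union hs).subset fun w ⟨hvw, hwY⟩ => by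
    by_contra h
    simp only [Set.mem_union, Set.mem_sdiff, not_or, not_and, not_not] at h
    exact hwY (hY w ⟨h.1 hvw, h.2⟩ hvw)

/-- A stage of the construction: the paper's component `Cᵢ`, here `X`, together with the initial
segment `path` of the ray built so far. -/
structure CombStage {V : Type u} (G : SimpleGraph V) (x₀ : V) where
  X : Set V
  x : V
  path : G.Walk x₀ x
  isPath : path.IsPath
  x_mem : x ∈ X
  eq_of_mem : ∀ z ∈ path.support, z ∈ X → z = x
  preconnected : (G.induce X).Preconnected
  finite_neighborSet_diff : ∀ v ∈ X, (G.neighborSet v \ X).Finite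
  not_inSchmidtClosure : ¬ InSchmidtClosure Wclass (G.induce X)

namespace CombStage

variable {V : Type u} {G : SimpleGraph V} {x₀ : V}

structure Step (σ : CombStage G x₀) where
  next : CombStage G x₀
  X_subset : next.X ⊆ σ.X
  extension : G.Walk σ.x next.x
  path_eq : next.path = σ.path.append extension
  extension_subset : ∀ z ∈ extension.support, z ∈ σ.X
  toothIndex : ℕ
  toothIndex_mem : σ.path.length ≤ toothIndex ∧ toothIndex < next.path.length
  tooth : V
  tooth_mem : tooth ∈ Vstar G
  toothPath : G.Walk (next.path.getVert toothIndex) tooth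
  toothPath_isPath : toothPath.IsPath
  toothPath_subset : ∀ z ∈ toothPath.support, z ∈ σ.X \ next.X
  toothPath_inter : ∀ z ∈ toothPath.support, z ∈ next.path.support →
    z = next.path.getVert toothIndex

def append (σ : CombStage G x₀) {Y : Set V} {c : V} (W : G.Walk σ.x c) (hW : W.IsPath)
    (hWX : ∀ z ∈ W.support, z ∈ σ.X) (hWY : ∀ z ∈ W.support, z ∈ Y → z = c) (hc : c ∈ Y)
    (hYX : Y ⊆ σ.X) (hY : (G.induce Y).Preconnected)
    (hYfin : ∀ v ∈ Y, (G.neighborSet v \ Y).Finite)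
    (hYbad : ¬ InSchmidtClosure Wclass (G.induce Y)) : CombStage G x₀ where
  X := Y
  x := c
  path := σ.path.append W
  isPath := σ.isPath.append hW fun z hzP hzW => σ.eq_of_mem z hzP (hWX z hzW)
  x_mem := hc
  eq_of_mem z hz hzY := by
    rcases (Walk.mem_support_append_iff _ _).mp hz with hz | hz
    · exact hWY z (σ.eq_of_mem z hz (hYX hzY) ▸ W.start_mem_support) hzY
    · exact hWY z hz hzY
  preconnected := hY
  finite_neighborSet_diff := hYfin
  not_inSchmidtClosure := hYbad

theorem nonempty_step_of_adj (σ : CombStage G x₀) {v : V} (hv : v ∈ Vstar G) {R : G.Walk σ.x v}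
    (hR : R.IsPath) (hRX : ∀ z ∈ R.support, z ∈ σ.X) {Y : Set V}
    (hYX : Y ⊆ σ.X \ {z | z ∈ R.support}) (hY : (G.induce Y).Preconnected)
    (hYbad : ¬ InSchmidtClosure Wclass (G.induce Y))
    (hYclosed : ∀ w ∈ Y, ∀ z ∈ σ.X \ {z | z ∈ R.support}, G.Adj w z → z ∈ Y)
    {d c : V} (hdR : d ∈ R.support) (hcY : c ∈ Y) (hdc : G.Adj d c) : Nonempty σ.Step := by
  classical
  set T := R.takeUntil d hdR
  set D := R.dropUntil d hdR
  have hRY : ∀ z ∈ R.support, z ∉ Y := fun z hz hzY => (hYX hzY).2 hz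
  have hTR : ∀ z ∈ T.support, z ∈ R.support := fun _ h => R.support_takeUntil_subset_support hdR h
  have hDR : ∀ z ∈ D.support, z ∈ R.support := fun _ h => R.support_dropUntil_subset_support hdR h
  have hW : ∀ z ∈ (T.concat hdc).support, z ∈ T.support ∨ z = c := by
    simp [Walk.support_concat]
  have hWX : ∀ z ∈ (T.concat hdc).support, z ∈ σ.X := fun z hz =>
    (hW z hz).elim (fun h => hRX z (hTR z h)) fun h => h ▸ (hYX hcY).1
  let τ := σ.append (T.concat hdc)
    ((hR.takeUntil hdR).concat (fun h => hRY c (hTR c h) hcY) hdc) hWX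
    (fun z hz hzY => (hW z hz).resolve_left fun h => hRY z (hTR z h) hzY) hcY
    (fun z hz => (hYX hz).1) hY
    (fun w hw => finite_neighborSet_diff_of_closed (σ.finite_neighborSet_diff w (hYX hw).1)
      R.support.finite_toSet (hYclosed w hw)) hYbad
  have hd : τ.path.getVert (σ.path.length + T.length) = d := by
    simp [τ, append, Walk.getVert_append, Walk.concat_eq_append]
  have hlen : τ.path.length = σ.path.length + T.length + 1 := by
    simp [τ, append, Walk.length_append, add_assoc]
  refine ⟨{
    next := τ
    X_subset := fun z hz => (hYX hz).1
    extension := T.concat hdc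
    path_eq := rfl
    extension_subset := hWX
    toothIndex := σ.path.length + T.length
    toothIndex_mem := ⟨by omega, by omega⟩
    tooth := v
    tooth_mem := hv
    toothPath := D.copy hd.symm rfl
    toothPath_isPath := (Walk.isPath_copy _ _ _).mpr (hR.dropUntil hdR)
    toothPath_subset := ?_
    toothPath_inter := ?_ }⟩
  · intro z hz
    rw [Walk.support_copy] at hz
    exact ⟨hRX z (hDR z hz), hRY z (hDR z hz)⟩
  · intro z hz hzτ
    rw [Walk.support_copy] at hz
    rw [hd]
    refine hR.eq_of_mem_takeUntil_of_mem_dropUntil hdR ?_ hz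
    rcases (Walk.mem_support_append_iff _ _).mp hzτ with h | h
    · rw [σ.eq_of_mem z h (hRX z (hDR z hz))]
      exact T.start_mem_support
    · exact (hW z h).resolve_right fun hzc => hRY z (hDR z hz) (hzc ▸ hcY)

theorem nonempty_step [Countable V] (σ : CombStage G x₀) : Nonempty σ.Step := by
  classical
  obtain ⟨v, hv, hvX⟩ :=
    (vstar_inter_infinite σ.not_inSchmidtClosure σ.finite_neighborSet_diff).nonempty
  obtain ⟨R, hR, hRX⟩ := exists_isPath_of_preconnected_induce σ.preconnected σ.x_mem hvX
  obtain ⟨Y, hYX, hY, hYconn, hYbad, hYclosed⟩ :=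
    exists_component_diff_not_inSchmidtClosure wclass_isoInvariant σ.not_inSchmidtClosure
      R.support.finite_toSet
  obtain ⟨d, ⟨hdX, hdY⟩, c, hcY, hdc⟩ := exists_adj_of_preconnected_induce σ.preconnected
    (fun z hz => (hYX hz).1) hY ⟨σ.x_mem, fun h => (hYX h).2 R.start_mem_support⟩
  have hdR : d ∈ R.support := by_contra fun h => hdY (hYclosed c hcY d ⟨hdX, h⟩ hdc.symm)
  exact σ.nonempty_step_of_adj hv hR hRX hYX hYconn hYbad hYclosed hdR hcY hdc

theorem exists_nonempty_of_not_inSchmidtClosure (hG : ¬ InSchmidtClosure Wclass G) :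
    ∃ x₀ : V, Nonempty (CombStage G x₀) := by
  have hU : ¬ InSchmidtClosure Wclass (G.induce Set.univ) := fun h =>
    hG (wclass_isoInvariant.inSchmidtClosure (induceUnivIso G) h)
  obtain ⟨Y, -, ⟨x₀, hx₀⟩, hYconn, hYbad, hYclosed⟩ :=
    exists_component_diff_not_inSchmidtClosure wclass_isoInvariant hU Set.finite_empty
  exact ⟨x₀, ⟨{
    X := Y
    x := x₀
    path := Walk.nil
    isPath := Walk.IsPath.nil
    x_mem := hx₀
    eq_of_mem := by simp
    preconnected := hYconn
    finite_neighborSet_diff := fun v hv =>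
      finite_neighborSet_diff_of_closed (by simp) Set.finite_empty (hYclosed v hv)
    not_inSchmidtClosure := hYbad }⟩⟩

noncomputable def iterate (step : ∀ σ : CombStage G x₀, σ.Step) (σ₀ : CombStage G x₀) :
    ℕ → CombStage G x₀
  | 0 => σ₀
  | n + 1 => (step (iterate step σ₀ n)).next

theorem hasCombWithTeethIn (step : ∀ σ : CombStage G x₀, σ.Step) (σ₀ : CombStage G x₀) :
    HasCombWithTeethIn G (Vstar G) :=
  let σ := iterate step σ₀
  hasCombWithTeethIn_of_append (P := fun n => (σ n).path) (fun n => (step (σ n)).path_eq)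
    (fun n => (σ n).isPath) (X := fun n => (σ n).X)
    (antitone_nat_of_succ_le fun n => (step (σ n)).X_subset)
    (fun n => (step (σ n)).extension_subset) (fun n => (step (σ n)).toothIndex_mem)
    (fun n => (step (σ n)).tooth_mem) (fun n => (step (σ n)).toothPath)
    (fun n => (step (σ n)).toothPath_isPath) (fun n => (step (σ n)).toothPath_subset)
    (fun n => (step (σ n)).toothPath_inter)

end CombStage

/-- If a countable graph does not lie in the Schmidt closure of 𝒲, then it contains a comb
with all its teeth in `V*(G)`. -/
theorem not_inSchmidtClosure_Wclass_hasComb {V : Type u} [Countable V] (G : SimpleGraph V)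
    (hG : ¬ InSchmidtClosure Wclass.{u} G) : HasCombWithTeethIn G (Vstar G) := by
  obtain ⟨x₀, ⟨σ₀⟩⟩ := CombStage.exists_nonempty_of_not_inSchmidtClosure hG
  exact CombStage.hasCombWithTeethIn (fun σ => σ.nonempty_step.some) σ₀
end
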